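/- arXiv:2503.14712 — 2 statements merged into one kernel-verified Lean document; each statement's English description precedes it below -/
import Mathlib

section
/- Fix a noise parameter η ∈ ℝ and define the swap-fidelity map s : ℝ × ℝ → ℝ by s(F₁, F₂) = 1/4 · (1 + 3η · ((4F₁ − 1)/3) · ((4F₂ − 1)/3)). For a full binary tree T whose leaves carry fidelities F₁, …, F_n ∈ ℝ, define fid(T) recursively by fid(leaf F) = F and fid(node T₁ T₂) = s(fid(T₁), fid(T₂)). Then fid(T) = 1/4 · (1 + 3 · η^{n−1} · ∏_{i=1}^{n} ((4F_i − 1)/3)). In particular, the fidelity of the final EP generated by a swapping tree depends only on the multiset of link-EP fidelities and the number of leaves, not on the structure of the tree. -/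
/-- A full binary tree with link-EP fidelities at its leaves. -/
inductive FTree where
  | leaf : ℝ → FTree
  | node : FTree → FTree → FTree

/-- The number of leaves. -/
def FTree.numLeaves : FTree → ℕ
  | .leaf _ => 1
  | .node l r => l.numLeaves + r.numLeaves

/-- The list of leaf fidelities, in left-to-right order. -/
def FTree.leafVals : FTree → List ℝ
  | .leaf v => [v]
  | .node l r => l.leafVals ++ r.leafVals

/-- The swap-fidelity map for an entanglement swapping with noise parameter
`η`: `s(F₁, F₂) = 1/4 * (1 + 3η * ((4F₁ − 1)/3) * ((4F₂ − 1)/3))`. -/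
noncomputable def swapFid (η F₁ F₂ : ℝ) : ℝ :=
  1 / 4 * (1 + 3 * η * ((4 * F₁ - 1) / 3) * ((4 * F₂ - 1) / 3))

/-- The fidelity produced by a swapping tree: leaves carry link fidelities and
each internal node applies the swap-fidelity map to its children. -/
noncomputable def FTree.fid (η : ℝ) : FTree → ℝ
  | .leaf F => F
  | .node l r => swapFid η (l.fid η) (r.fid η)

lemma FTree.one_le_numLeaves : ∀ T : FTree, 1 ≤ T.numLeaves
  | .leaf _ => le_refl 1
  | .node l r => le_trans l.one_le_numLeaves (Nat.le_add_right _ _)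

/-- **The fidelity of a swapping tree depends only on the link fidelities and
the number of leaves, not on the tree structure:**
`fid T = 1/4 * (1 + 3 * η^(n−1) * ∏ᵢ ((4Fᵢ − 1)/3))`. -/
theorem fid_eq_closed_form (η : ℝ) (T : FTree) :
    T.fid η =
      1 / 4 * (1 + 3 * η ^ (T.numLeaves - 1) *
        (T.leafVals.map fun F => (4 * F - 1) / 3).prod) := by
  induction T with
  | leaf F => simp [FTree.fid, FTree.numLeaves, FTree.leafVals]; ring
  | node l r ihl ihr =>
    have hl := l.one_le_numLeaves
    have hr := r.one_le_numLeaves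
    have hpow : η ^ (l.numLeaves + r.numLeaves - 1)
        = η * η ^ (l.numLeaves - 1) * η ^ (r.numLeaves - 1) := by
      rw [← pow_succ', ← pow_add]
      congr 1
      omega
    simp only [FTree.fid, FTree.numLeaves, FTree.leafVals, swapFid, ihl, ihr,
      List.map_append, List.prod_append, hpow]
    ring
end

section
/- Let H = ℂ² with standard basis e₀, e₁, and let H ⊗ H carry the induced inner product. There is no unitary (indeed, no linear) map U : H ⊗ H → H ⊗ H such that U(ψ ⊗ e₀) = ψ ⊗ ψ for all unit vectors ψ ∈ H. (Proof sketch per the no-cloning theorem: applying the hypothesis to e₀, e₁, and (e₀ + e₁)/√2 contradicts linearity.) -/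
open scoped TensorProduct

noncomputable def qubitBasis (i : Fin 2) : EuclideanSpace ℂ (Fin 2) :=
  EuclideanSpace.single i 1

lemma norm_qubitBasis (i : Fin 2) : ‖qubitBasis i‖ = 1 := by
  simp [qubitBasis, EuclideanSpace.norm_single]

lemma norm_plus : ‖((Real.sqrt 2 : ℂ)⁻¹) • (qubitBasis 0 + qubitBasis 1)‖ = 1 := by
  rw [norm_smul]
  have h01 : inner (𝕜 := ℂ) (qubitBasis 0) (qubitBasis 1) = 0 := by
    simp [qubitBasis, EuclideanSpace.inner_single_left]
  have hn : ‖qubitBasis 0 + qubitBasis 1‖ = Real.sqrt 2 := by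
    have h := norm_add_sq (𝕜 := ℂ) (qubitBasis 0) (qubitBasis 1)
    rw [show ‖qubitBasis 0 + qubitBasis 1‖ = Real.sqrt (‖qubitBasis 0 + qubitBasis 1‖^2) by
      rw [Real.sqrt_sq (norm_nonneg _)]]
    rw [h, h01, norm_qubitBasis, norm_qubitBasis]
    norm_num
  rw [hn, norm_inv]
  have h2 : (0:ℝ) < Real.sqrt 2 := Real.sqrt_pos.2 (by norm_num)
  simp [Complex.norm_real, abs_of_pos h2]

/-- **The no-cloning theorem.** There is no linear map (in particular, no
unitary) `U : ℂ² ⊗ ℂ² → ℂ² ⊗ ℂ²` such that `U (ψ ⊗ e₀) = ψ ⊗ ψ` for all unit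
vectors `ψ ∈ ℂ²`. -/
theorem no_cloning :
    ¬ ∃ U : (EuclideanSpace ℂ (Fin 2) ⊗[ℂ] EuclideanSpace ℂ (Fin 2)) →ₗ[ℂ]
        (EuclideanSpace ℂ (Fin 2) ⊗[ℂ] EuclideanSpace ℂ (Fin 2)),
      ∀ ψ : EuclideanSpace ℂ (Fin 2), ‖ψ‖ = 1 →
        U (ψ ⊗ₜ[ℂ] qubitBasis 0) = ψ ⊗ₜ[ℂ] ψ := by
  rintro ⟨U, hU⟩
  set c : ℂ := (Real.sqrt 2 : ℂ)⁻¹ with hc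
  have h0 := hU (qubitBasis 0) (norm_qubitBasis 0)
  have h1 := hU (qubitBasis 1) (norm_qubitBasis 1)
  have hp := hU (c • (qubitBasis 0 + qubitBasis 1)) norm_plus
  have hlin : U ((c • (qubitBasis 0 + qubitBasis 1)) ⊗ₜ[ℂ] qubitBasis 0)
      = c • (qubitBasis 0 ⊗ₜ[ℂ] qubitBasis 0) + c • (qubitBasis 1 ⊗ₜ[ℂ] qubitBasis 1) := by
    rw [← TensorProduct.smul_tmul', map_smul, TensorProduct.add_tmul, map_add, h0, h1, smul_add]
  rw [hp] at hlin
  have hexp : (c • (qubitBasis 0 + qubitBasis 1)) ⊗ₜ[ℂ] (c • (qubitBasis 0 + qubitBasis 1))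
      = (c*c) • (qubitBasis 0 ⊗ₜ[ℂ] qubitBasis 0)
      + (c*c) • (qubitBasis 0 ⊗ₜ[ℂ] qubitBasis 1)
      + (c*c) • (qubitBasis 1 ⊗ₜ[ℂ] qubitBasis 0)
      + (c*c) • (qubitBasis 1 ⊗ₜ[ℂ] qubitBasis 1) := by
    simp only [← TensorProduct.smul_tmul', TensorProduct.tmul_smul, TensorProduct.add_tmul,
      TensorProduct.tmul_add, smul_add, smul_smul]
    abel
  rw [hexp] at hlin
  have hb : ∀ i, qubitBasis i = (EuclideanSpace.basisFun (Fin 2) ℂ).toBasis i := by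
    intro i
    simp [qubitBasis, EuclideanSpace.basisFun]
    rfl
  set B := ((EuclideanSpace.basisFun (Fin 2) ℂ).toBasis.tensorProduct
    (EuclideanSpace.basisFun (Fin 2) ℂ).toBasis) with hB
  have e : ∀ i j : Fin 2, qubitBasis i ⊗ₜ[ℂ] qubitBasis j = B (i, j) := by
    intro i j
    rw [hB, Module.Basis.tensorProduct_apply, ← hb, ← hb]
  simp only [e] at hlin
  have key := congrArg (fun v => B.repr v ((0:Fin 2), (1:Fin 2))) hlin
  simp [Module.Basis.repr_self, Finsupp.single_apply, Prod.ext_iff] at key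
  have hc0 : c ≠ 0 := by
    rw [hc]
    exact inv_ne_zero (Complex.ofReal_ne_zero.mpr (by positivity))
  exact hc0 key
end
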